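/- Let ε(q) = 2·Σ_{i=1}^{3}(1 − cos qᵢ), b = (2π)^{−3} ∫_{[−π,π]³} cos²(q₁) dq/ε(q), d = (2π)^{−3} ∫_{[−π,π]³} cos(q₁)cos(q₂) dq/ε(q). If λ ∈ ℝ satisfies λ·(b − d) = −1, then for every μ ∈ ℝ and every p ∈ ℝ³: (2π)^{−3} ∫_{[−π,π]³} (μ + λ·Σ_{i=1}^{3} cos(pᵢ − qᵢ))·(cos(q₁) − cos(q₂))/ε(q) dq = −(cos(p₁) − cos(p₂)). -/
import Mathlib

open MeasureTheory Real

noncomputable section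

/-- The cube `[-π,π]³` in `ℝ³`, a fundamental domain for the torus `𝕋³`. -/
def cube3 : Set (Fin 3 → ℝ) := Set.Icc (fun _ => -π) (fun _ => π)

/-- The dispersion relation of the discrete Laplacian on `ℤ³`. -/
def εD (q : Fin 3 → ℝ) : ℝ := 2 * ∑ i, (1 - Real.cos (q i))

def swap01 : Equiv.Perm (Fin 3) := Equiv.swap 0 1

lemma swap01_symm : swap01.symm = swap01 := Equiv.symm_swap 0 1

lemma swap01_0 : swap01 (0 : Fin 3) = 1 := by simp [swap01]
lemma swap01_1 : swap01 (1 : Fin 3) = 0 := by simp [swap01]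
lemma swap01_2 : swap01 (2 : Fin 3) = 2 := by
  simp [swap01, Equiv.swap_apply_of_ne_of_ne]

lemma integral_swap01 (f : (Fin 3 → ℝ) → ℝ) :
    ∫ q in cube3, f (fun i => q (swap01 i)) = ∫ q in cube3, f q := by
  have mp := volume_measurePreserving_piCongrLeft (fun _ : Fin 3 => ℝ) swap01
  set e := MeasurableEquiv.piCongrLeft (fun _ : Fin 3 => ℝ) swap01 with he_def
  have he : ∀ (q : Fin 3 → ℝ) (i : Fin 3), e q i = q (swap01.symm i) := by
    intro q i
    show (Equiv.piCongrLeft (fun _ => ℝ) swap01) q i = _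
    conv_lhs => rw [show i = swap01 (swap01.symm i) by simp]
    rw [Equiv.piCongrLeft_apply_apply]
  have hpre : e ⁻¹' cube3 = cube3 := by
    ext q
    simp only [Set.mem_preimage, cube3, Set.mem_Icc, Pi.le_def, he]
    constructor
    · rintro ⟨h1, h2⟩
      exact ⟨fun i => by simpa using h1 (swap01 i), fun i => by simpa using h2 (swap01 i)⟩
    · rintro ⟨h1, h2⟩
      exact ⟨fun i => h1 _, fun i => h2 _⟩
  have key := mp.setIntegral_preimage_emb e.measurableEmbedding f cube3
  rw [hpre] at key
  rw [← key]
  refine setIntegral_congr_fun measurableSet_Icc fun q _ => ?_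
  congr 1
  funext i
  rw [he, swap01_symm]

lemma integral_neg3 (f : (Fin 3 → ℝ) → ℝ) :
    ∫ q in cube3, f (-q) = ∫ q in cube3, f q := by
  have mp : MeasurePreserving (fun q : Fin 3 → ℝ => -q) volume volume :=
    Measure.measurePreserving_neg _
  have emb : MeasurableEmbedding (fun q : Fin 3 → ℝ => -q) :=
    (MeasurableEquiv.neg (Fin 3 → ℝ)).measurableEmbedding
  have hpre : (fun q : Fin 3 → ℝ => -q) ⁻¹' cube3 = cube3 := by
    ext q
    simp only [Set.mem_preimage, cube3, Set.mem_Icc, Pi.le_def, Pi.neg_apply]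
    constructor
    · rintro ⟨h1, h2⟩
      exact ⟨fun i => by linarith [h2 i], fun i => by linarith [h1 i]⟩
    · rintro ⟨h1, h2⟩
      exact ⟨fun i => by linarith [h2 i], fun i => by linarith [h1 i]⟩
  have key := mp.setIntegral_preimage_emb emb f cube3
  rw [hpre] at key
  exact key

lemma εD_swap01 (q : Fin 3 → ℝ) : εD (fun i => q (swap01 i)) = εD q := by
  simp [εD, Fin.sum_univ_three, swap01_0, swap01_1, swap01_2]
  ring

lemma εD_neg (q : Fin 3 → ℝ) : εD (-q) = εD q := by
  simp [εD]

lemma εD_nonneg (q : Fin 3 → ℝ) : 0 ≤ εD q := by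
  have h1 : ∀ i : Fin 3, 0 ≤ 1 - Real.cos (q i) := fun i => by
    linarith [Real.cos_le_one (q i)]
  have h2 : (0:ℝ) ≤ ∑ i, (1 - Real.cos (q i)) := Finset.sum_nonneg (fun i _ => h1 i)
  unfold εD; linarith

lemma εD_continuous : Continuous εD := by
  unfold εD; fun_prop

lemma g1_integrable : IntegrableOn (fun x : ℝ => |x| ^ (-(2/3) : ℝ)) (Set.Icc (-π) π) := by
  have hpos : IntegrableOn (fun x : ℝ => |x| ^ (-(2/3) : ℝ)) (Set.Ioc 0 π) := by
    have h1 : IntervalIntegrable (fun x : ℝ => x ^ (-(2/3) : ℝ)) volume 0 π := by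
      apply intervalIntegral.intervalIntegrable_rpow'; norm_num
    have h2 : IntegrableOn (fun x : ℝ => x ^ (-(2/3) : ℝ)) (Set.Ioc 0 π) := by
      rw [← intervalIntegrable_iff_integrableOn_Ioc_of_le pi_pos.le]; exact h1
    refine h2.congr_fun (fun x hx => ?_) measurableSet_Ioc
    rw [abs_of_pos hx.1]
  have hneg : IntegrableOn (fun x : ℝ => |x| ^ (-(2/3) : ℝ)) (Set.Ico (-π) 0) := by
    have mp : MeasurePreserving (fun x : ℝ => -x) volume volume :=
      Measure.measurePreserving_neg _
    have emb : MeasurableEmbedding (fun x : ℝ => -x) :=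
      (MeasurableEquiv.neg ℝ).measurableEmbedding
    have h3 := (mp.integrableOn_comp_preimage emb (s := Set.Ioc 0 π)
      (f := fun x : ℝ => |x| ^ (-(2/3) : ℝ))).2 hpos
    have hset : (fun x : ℝ => -x) ⁻¹' (Set.Ioc 0 π) = Set.Ico (-π) 0 := by
      ext x; simp only [Set.mem_preimage, Set.mem_Ioc, Set.mem_Ico]
      constructor <;> intro h <;> constructor <;> linarith [h.1, h.2]
    rw [hset] at h3
    refine h3.congr_fun (fun x hx => ?_) measurableSet_Ico
    simp [abs_neg]
  have h3 : IntegrableOn (fun x : ℝ => |x| ^ (-(2/3) : ℝ)) (Set.Icc 0 π) := by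
    rw [integrableOn_Icc_iff_integrableOn_Ioc]; exact hpos
  rw [← Set.Ico_union_Icc_eq_Icc (by linarith [pi_pos] : -π ≤ (0:ℝ)) pi_pos.le]
  exact hneg.union h3

lemma sq_rpow_third (x : ℝ) : ((x^2 : ℝ)) ^ ((1:ℝ)/3) = |x| ^ ((2:ℝ)/3) := by
  rw [← sq_abs, ← Real.rpow_natCast |x| 2, ← Real.rpow_mul (abs_nonneg x)]
  norm_num

lemma eps_inv_bound (q : Fin 3 → ℝ) (hq : q ∈ cube3) (hne : ∀ i, q i ≠ 0) :
    (εD q)⁻¹ ≤ π^2/12 * ∏ i, |q i| ^ (-(2/3) : ℝ) := by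
  obtain ⟨hq1, hq2⟩ := hq
  have habs : ∀ i, |q i| ≤ π := fun i => abs_le.2 ⟨hq1 i, hq2 i⟩
  have hcos : ∀ i, 2/π^2*(q i)^2 ≤ 1 - Real.cos (q i) := fun i => by
    have := Real.cos_le_one_sub_mul_cos_sq (habs i); linarith
  set P : ℝ := ∏ i, |q i| ^ ((2:ℝ)/3) with hP
  have hPpos : 0 < P := Finset.prod_pos fun i _ =>
    Real.rpow_pos_of_pos (abs_pos.2 (hne i)) _
  have hamgm : P ≤ (1/3)*((q 0)^2 + (q 1)^2 + (q 2)^2) := by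
    have := Real.geom_mean_le_arith_mean3_weighted (w₁ := 1/3) (w₂ := 1/3) (w₃ := 1/3)
      (p₁ := (q 0)^2) (p₂ := (q 1)^2) (p₃ := (q 2)^2) (by norm_num) (by norm_num)
      (by norm_num) (sq_nonneg _) (sq_nonneg _) (sq_nonneg _) (by norm_num)
    rw [sq_rpow_third, sq_rpow_third, sq_rpow_third] at this
    rw [hP, Fin.prod_univ_three]
    linarith
  have heps : 12/π^2 * P ≤ εD q := by
    have hπ2 : (0:ℝ) < π^2 := by positivity
    have hcos' : ∀ i, 2*(q i)^2 ≤ (1 - Real.cos (q i))*π^2 := fun i => by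
      have h := hcos i; rw [div_mul_eq_mul_div, div_le_iff₀ hπ2] at h; linarith
    rw [εD, Fin.sum_univ_three, div_mul_eq_mul_div, div_le_iff₀ hπ2]
    linarith [hamgm, hcos' 0, hcos' 1, hcos' 2]
  have hinv : (εD q)⁻¹ ≤ (12/π^2 * P)⁻¹ := by
    apply inv_anti₀ (by positivity) heps
  refine hinv.trans_eq ?_
  rw [mul_inv, show ((12:ℝ)/π^2)⁻¹ = π^2/12 by rw [inv_div]]
  congr 1
  rw [← Finset.prod_inv_distrib]
  exact Finset.prod_congr rfl fun i _ => by
    rw [← Real.rpow_neg (abs_nonneg _)]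

lemma ae_ne_zero : ∀ᵐ q : Fin 3 → ℝ ∂(volume.restrict cube3), ∀ i, q i ≠ 0 := by
  apply ae_restrict_of_ae
  rw [ae_all_iff]
  intro i
  have := MeasureTheory.Measure.ae_eval_ne (fun _ : Fin 3 => (volume : Measure ℝ)) i 0
  rwa [← volume_pi] at this

lemma integrableOn_mul_inv (c : (Fin 3 → ℝ) → ℝ) (hc : Measurable c)
    (hbd : ∀ q, |c q| ≤ 2) :
    IntegrableOn (fun q => c q * (εD q)⁻¹) cube3 := by
  set h : ℝ → ℝ := (Set.Icc (-π) π).indicator (fun x => |x| ^ (-(2/3) : ℝ)) with hh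
  have hint : Integrable h := (integrable_indicator_iff measurableSet_Icc).2 g1_integrable
  have hG : Integrable (fun q : Fin 3 → ℝ => ∏ i, h (q i)) :=
    Integrable.fintype_prod (𝕜 := ℝ) (fun _ => hint)
  refine Integrable.mono' ((hG.const_mul (π^2/6)).integrableOn) ?_ ?_
  · exact (hc.mul (εD_continuous.measurable.inv)).aestronglyMeasurable
  · filter_upwards [ae_ne_zero, ae_restrict_mem measurableSet_Icc] with q hne hq
    have hhq : ∀ i, h (q i) = |q i| ^ (-(2/3) : ℝ) := fun i => by
      rw [hh, Set.indicator_of_mem (Set.mem_Icc.mpr ⟨hq.1 i, hq.2 i⟩)]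
    have hb := eps_inv_bound q hq hne
    have hεnn : 0 ≤ (εD q)⁻¹ := inv_nonneg.2 (εD_nonneg q)
    rw [Real.norm_eq_abs, abs_mul, abs_inv, abs_of_nonneg (εD_nonneg q)]
    calc |c q| * (εD q)⁻¹ ≤ 2 * (εD q)⁻¹ := by
          apply mul_le_mul_of_nonneg_right (hbd q) hεnn
      _ ≤ 2 * (π^2/12 * ∏ i, |q i| ^ (-(2/3) : ℝ)) := by
          apply mul_le_mul_of_nonneg_left hb (by norm_num)
      _ = π^2/6 * ∏ i, h (q i) := by simp_rw [hhq]; ring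

lemma bd2 {a b c : ℝ} (ha : |a| ≤ 1) (hb : |b| ≤ 1) (hc : |c| ≤ 1) : |a * (b - c)| ≤ 2 := by
  rw [abs_mul]
  have h1 : |b - c| ≤ 2 := (abs_sub b c).trans (by linarith)
  nlinarith [abs_nonneg a, abs_nonneg (b - c)]

lemma int_A_zero : ∫ q in cube3, (Real.cos (q 0) - Real.cos (q 1)) * (εD q)⁻¹ = 0 := by
  have h := integral_swap01 (fun q => (Real.cos (q 0) - Real.cos (q 1)) * (εD q)⁻¹)
  simp only [swap01_0, swap01_1, εD_swap01] at h
  have h2 : (fun q : Fin 3 → ℝ => (Real.cos (q 1) - Real.cos (q 0)) * (εD q)⁻¹)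
      = fun q => -((Real.cos (q 0) - Real.cos (q 1)) * (εD q)⁻¹) := funext fun q => by ring
  rw [h2, integral_neg] at h
  linarith

lemma int_c2A_zero :
    ∫ q in cube3, Real.cos (q 2) * ((Real.cos (q 0) - Real.cos (q 1)) * (εD q)⁻¹) = 0 := by
  have h := integral_swap01
    (fun q => Real.cos (q 2) * ((Real.cos (q 0) - Real.cos (q 1)) * (εD q)⁻¹))
  simp only [swap01_0, swap01_1, swap01_2, εD_swap01] at h
  have h2 : (fun q : Fin 3 → ℝ => Real.cos (q 2) * ((Real.cos (q 1) - Real.cos (q 0)) * (εD q)⁻¹))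
      = fun q => -(Real.cos (q 2) * ((Real.cos (q 0) - Real.cos (q 1)) * (εD q)⁻¹)) :=
    funext fun q => by ring
  rw [h2, integral_neg] at h
  linarith

lemma int_c1A :
    ∫ q in cube3, Real.cos (q 1) * ((Real.cos (q 0) - Real.cos (q 1)) * (εD q)⁻¹)
      = - ∫ q in cube3, Real.cos (q 0) * ((Real.cos (q 0) - Real.cos (q 1)) * (εD q)⁻¹) := by
  have h := integral_swap01
    (fun q => Real.cos (q 1) * ((Real.cos (q 0) - Real.cos (q 1)) * (εD q)⁻¹))
  simp only [swap01_0, swap01_1, εD_swap01] at h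
  have h2 : (fun q : Fin 3 → ℝ => Real.cos (q 0) * ((Real.cos (q 1) - Real.cos (q 0)) * (εD q)⁻¹))
      = fun q => -(Real.cos (q 0) * ((Real.cos (q 0) - Real.cos (q 1)) * (εD q)⁻¹)) :=
    funext fun q => by ring
  rw [h2, integral_neg] at h
  linarith

lemma int_sinA_zero (i : Fin 3) :
    ∫ q in cube3, Real.sin (q i) * ((Real.cos (q 0) - Real.cos (q 1)) * (εD q)⁻¹) = 0 := by
  have h := integral_neg3
    (fun q => Real.sin (q i) * ((Real.cos (q 0) - Real.cos (q 1)) * (εD q)⁻¹))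
  simp only [Pi.neg_apply, Real.sin_neg, Real.cos_neg, εD_neg] at h
  have h2 : (fun q : Fin 3 → ℝ => -Real.sin (q i) * ((Real.cos (q 0) - Real.cos (q 1)) * (εD q)⁻¹))
      = fun q => -(Real.sin (q i) * ((Real.cos (q 0) - Real.cos (q 1)) * (εD q)⁻¹)) :=
    funext fun q => by ring
  rw [h2, integral_neg] at h
  linarith

/-- if `λ·(b - d) = -1`, then the even function
`cos p₁ - cos p₂` is an eigenfunction of the threshold Birman–Schwinger
operator with eigenvalue `-1`, for every `μ`. -/
theorem even_threshold_eigenfunction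
    (b d : ℝ)
    (hb : b = ((2 * π) ^ 3)⁻¹ * ∫ q in cube3, (Real.cos (q 0)) ^ 2 * (εD q)⁻¹)
    (hd : d = ((2 * π) ^ 3)⁻¹ *
      ∫ q in cube3, Real.cos (q 0) * Real.cos (q 1) * (εD q)⁻¹)
    (lam : ℝ) (hlam : lam * (b - d) = -1) :
    ∀ (μ : ℝ) (p : Fin 3 → ℝ),
      ((2 * π) ^ 3)⁻¹ *
        ∫ q in cube3,
          (μ + lam * ∑ i, Real.cos (p i - q i)) *
            (Real.cos (q 0) - Real.cos (q 1)) / εD q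
          = -(Real.cos (p 0) - Real.cos (p 1)) := by
  intro μ p
  have h2π : ((2:ℝ) * π) ^ 3 ≠ 0 := by positivity
  have iA : IntegrableOn (fun q => (Real.cos (q 0) - Real.cos (q 1)) * (εD q)⁻¹) cube3 :=
    integrableOn_mul_inv _ (by fun_prop) (fun q => by
      have h := bd2 (a := 1) (le_of_eq abs_one) (Real.abs_cos_le_one (q 0))
        (Real.abs_cos_le_one (q 1))
      simpa using h)
  have iB : ∀ g : (Fin 3 → ℝ) → ℝ, Measurable g → (∀ q, |g q| ≤ 1) →
      IntegrableOn (fun q => g q * ((Real.cos (q 0) - Real.cos (q 1)) * (εD q)⁻¹)) cube3 := by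
    intro g hg hgb
    have h := integrableOn_mul_inv (fun q => g q * (Real.cos (q 0) - Real.cos (q 1)))
      (by fun_prop) (fun q => bd2 (hgb q) (Real.abs_cos_le_one _) (Real.abs_cos_le_one _))
    simpa [mul_assoc] using h
  set J := ∫ q in cube3, Real.cos (q 0) * ((Real.cos (q 0) - Real.cos (q 1)) * (εD q)⁻¹) with hJdef
  have hJ : J = (2 * π) ^ 3 * (b - d) := by
    have icos2 : IntegrableOn (fun q => (Real.cos (q 0))^2 * (εD q)⁻¹) cube3 :=
      integrableOn_mul_inv _ (by fun_prop) (fun q => by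
        have h := Real.abs_cos_le_one (q 0)
        rw [abs_pow]
        nlinarith [abs_nonneg (Real.cos (q 0))])
    have icos01 : IntegrableOn (fun q => Real.cos (q 0) * Real.cos (q 1) * (εD q)⁻¹) cube3 :=
      integrableOn_mul_inv _ (by fun_prop) (fun q => by
        rw [abs_mul]
        have h1 := Real.abs_cos_le_one (q 0); have h2 := Real.abs_cos_le_one (q 1)
        nlinarith [abs_nonneg (Real.cos (q 0)), abs_nonneg (Real.cos (q 1))])
    have hsplit : (fun q : Fin 3 → ℝ =>
        Real.cos (q 0) * ((Real.cos (q 0) - Real.cos (q 1)) * (εD q)⁻¹))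
        = fun q => (Real.cos (q 0))^2 * (εD q)⁻¹
            - Real.cos (q 0) * Real.cos (q 1) * (εD q)⁻¹ := funext fun q => by ring
    rw [hJdef, hsplit, integral_sub icos2 icos01]
    have e1 : (∫ q in cube3, (Real.cos (q 0))^2 * (εD q)⁻¹) = (2 * π) ^ 3 * b := by
      rw [hb, ← mul_assoc, mul_inv_cancel₀ h2π, one_mul]
    have e2 : (∫ q in cube3, Real.cos (q 0) * Real.cos (q 1) * (εD q)⁻¹)
        = (2 * π) ^ 3 * d := by
      rw [hd, ← mul_assoc, mul_inv_cancel₀ h2π, one_mul]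
    rw [e1, e2]; ring
  have hexp : ∀ x : Fin 3 → ℝ,
      (μ + lam * ∑ i, Real.cos (p i - x i)) * (Real.cos (x 0) - Real.cos (x 1)) / εD x
      = μ * ((Real.cos (x 0) - Real.cos (x 1)) * (εD x)⁻¹) + (lam * Real.cos (p 0)) * (Real.cos (x 0) * ((Real.cos (x 0) - Real.cos (x 1)) * (εD x)⁻¹)) + (lam * Real.cos (p 1)) * (Real.cos (x 1) * ((Real.cos (x 0) - Real.cos (x 1)) * (εD x)⁻¹)) + (lam * Real.cos (p 2)) * (Real.cos (x 2) * ((Real.cos (x 0) - Real.cos (x 1)) * (εD x)⁻¹)) + (lam * Real.sin (p 0)) * (Real.sin (x 0) * ((Real.cos (x 0) - Real.cos (x 1)) * (εD x)⁻¹)) + (lam * Real.sin (p 1)) * (Real.sin (x 1) * ((Real.cos (x 0) - Real.cos (x 1)) * (εD x)⁻¹)) + (lam * Real.sin (p 2)) * (Real.sin (x 2) * ((Real.cos (x 0) - Real.cos (x 1)) * (εD x)⁻¹)) := by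
    intro x
    rw [Fin.sum_univ_three, Real.cos_sub, Real.cos_sub, Real.cos_sub, div_eq_mul_inv]
    ring
  have hI : (∫ q in cube3,
      (μ + lam * ∑ i, Real.cos (p i - q i)) * (Real.cos (q 0) - Real.cos (q 1)) / εD q)
      = lam * (Real.cos (p 0) - Real.cos (p 1)) * J := by
    rw [show (fun q : Fin 3 → ℝ =>
        (μ + lam * ∑ i, Real.cos (p i - q i)) * (Real.cos (q 0) - Real.cos (q 1)) / εD q)
        = fun x => μ * ((Real.cos (x 0) - Real.cos (x 1)) * (εD x)⁻¹) + (lam * Real.cos (p 0)) * (Real.cos (x 0) * ((Real.cos (x 0) - Real.cos (x 1)) * (εD x)⁻¹)) + (lam * Real.cos (p 1)) * (Real.cos (x 1) * ((Real.cos (x 0) - Real.cos (x 1)) * (εD x)⁻¹)) + (lam * Real.cos (p 2)) * (Real.cos (x 2) * ((Real.cos (x 0) - Real.cos (x 1)) * (εD x)⁻¹)) + (lam * Real.sin (p 0)) * (Real.sin (x 0) * ((Real.cos (x 0) - Real.cos (x 1)) * (εD x)⁻¹)) + (lam * Real.sin (p 1)) * (Real.sin (x 1) * ((Real.cos (x 0)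 - Real.cos (x 1)) * (εD x)⁻¹)) + (lam * Real.sin (p 2)) * (Real.sin (x 2) * ((Real.cos (x 0) - Real.cos (x 1)) * (εD x)⁻¹)) from funext hexp]
    have k0 : IntegrableOn (fun x => μ * ((Real.cos (x 0) - Real.cos (x 1)) * (εD x)⁻¹)) cube3 := iA.const_mul μ
    have k1 : IntegrableOn (fun x => (lam * Real.cos (p 0)) * (Real.cos (x 0) * ((Real.cos (x 0) - Real.cos (x 1)) * (εD x)⁻¹))) cube3 :=
      (iB (fun x => Real.cos (x 0)) (by fun_prop) (fun x => Real.abs_cos_le_one _)).const_mul _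
    have k2 : IntegrableOn (fun x => (lam * Real.cos (p 1)) * (Real.cos (x 1) * ((Real.cos (x 0) - Real.cos (x 1)) * (εD x)⁻¹))) cube3 :=
      (iB (fun x => Real.cos (x 1)) (by fun_prop) (fun x => Real.abs_cos_le_one _)).const_mul _
    have k3 : IntegrableOn (fun x => (lam * Real.cos (p 2)) * (Real.cos (x 2) * ((Real.cos (x 0) - Real.cos (x 1)) * (εD x)⁻¹))) cube3 :=
      (iB (fun x => Real.cos (x 2)) (by fun_prop) (fun x => Real.abs_cos_le_one _)).const_mul _
    have k4 : IntegrableOn (fun x => (lam * Real.sin (p 0)) * (Real.sin (x 0) * ((Real.cos (x 0) - Real.cos (x 1)) * (εD x)⁻¹))) cube3 :=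
      (iB (fun x => Real.sin (x 0)) (by fun_prop) (fun x => Real.abs_sin_le_one _)).const_mul _
    have k5 : IntegrableOn (fun x => (lam * Real.sin (p 1)) * (Real.sin (x 1) * ((Real.cos (x 0) - Real.cos (x 1)) * (εD x)⁻¹))) cube3 :=
      (iB (fun x => Real.sin (x 1)) (by fun_prop) (fun x => Real.abs_sin_le_one _)).const_mul _
    have k6 : IntegrableOn (fun x => (lam * Real.sin (p 2)) * (Real.sin (x 2) * ((Real.cos (x 0) - Real.cos (x 1)) * (εD x)⁻¹))) cube3 :=
      (iB (fun x => Real.sin (x 2)) (by fun_prop) (fun x => Real.abs_sin_le_one _)).const_mul _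
    have k01 : IntegrableOn (fun x => μ * ((Real.cos (x 0) - Real.cos (x 1)) * (εD x)⁻¹) + (lam * Real.cos (p 0)) * (Real.cos (x 0) * ((Real.cos (x 0) - Real.cos (x 1)) * (εD x)⁻¹))) cube3 := k0.add k1
    have k02 : IntegrableOn (fun x => μ * ((Real.cos (x 0) - Real.cos (x 1)) * (εD x)⁻¹) + (lam * Real.cos (p 0)) * (Real.cos (x 0) * ((Real.cos (x 0) - Real.cos (x 1)) * (εD x)⁻¹)) + (lam * Real.cos (p 1)) * (Real.cos (x 1) * ((Real.cos (x 0) - Real.cos (x 1)) * (εD x)⁻¹))) cube3 := k01.add k2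
    have k03 : IntegrableOn (fun x => μ * ((Real.cos (x 0) - Real.cos (x 1)) * (εD x)⁻¹) + (lam * Real.cos (p 0)) * (Real.cos (x 0) * ((Real.cos (x 0) - Real.cos (x 1)) * (εD x)⁻¹)) + (lam * Real.cos (p 1)) * (Real.cos (x 1) * ((Real.cos (x 0) - Real.cos (x 1)) * (εD x)⁻¹)) + (lam * Real.cos (p 2)) * (Real.cos (x 2) * ((Real.cos (x 0) - Real.cos (x 1)) * (εD x)⁻¹))) cube3 := k02.add k3
    have k04 : IntegrableOn (fun x => μ * ((Real.cos (x 0) - Real.cos (x 1)) * (εD x)⁻¹) + (lam * Real.cos (p 0)) * (Real.cos (x 0) * ((Real.cos (x 0) - Real.cos (x 1)) * (εD x)⁻¹)) + (lam * Real.cos (p 1)) * (Real.cos (x 1) * ((Real.cos (x 0) - Real.cos (x 1)) * (εD x)⁻¹)) + (lam * Real.cos (p 2)) * (Real.cos (x 2) * ((Real.cos (x 0) - Real.cos (x 1)) * (εD x)⁻¹)) + (lam * Real.sin (p 0)) * (Real.sin (x 0) * ((Real.cos (x 0) - Real.cos (x 1)) * (εD x)⁻¹))) cube3 := k03.add k4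
    have k05 : IntegrableOn (fun x => μ * ((Real.cos (x 0) - Real.cos (x 1)) * (εD x)⁻¹) + (lam * Real.cos (p 0)) * (Real.cos (x 0) * ((Real.cos (x 0) - Real.cos (x 1)) * (εD x)⁻¹)) + (lam * Real.cos (p 1)) * (Real.cos (x 1) * ((Real.cos (x 0) - Real.cos (x 1)) * (εD x)⁻¹)) + (lam * Real.cos (p 2)) * (Real.cos (x 2) * ((Real.cos (x 0) - Real.cos (x 1)) * (εD x)⁻¹)) + (lam * Real.sin (p 0)) * (Real.sin (x 0) * ((Real.cos (x 0) - Real.cos (x 1)) * (εD x)⁻¹)) + (lam * Real.sin (p 1)) * (Real.sin (x 1) * ((Real.cos (x 0) - Real.cos (x 1)) * (εD x)⁻¹))) cube3 := k04.add k5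
    rw [integral_add k05 k6, integral_add k04 k5, integral_add k03 k4,
        integral_add k02 k3, integral_add k01 k2, integral_add k0 k1,
        integral_const_mul, integral_const_mul, integral_const_mul, integral_const_mul,
        integral_const_mul, integral_const_mul, integral_const_mul]
    rw [int_A_zero, int_c2A_zero, int_c1A, int_sinA_zero, int_sinA_zero, int_sinA_zero,
        ← hJdef]
    ring
  rw [hI, hJ, ← mul_assoc]
  rw [show ((2 * π) ^ 3)⁻¹ * (lam * (Real.cos (p 0) - Real.cos (p 1))) * ((2 * π) ^ 3 * (b - d))
      = (Real.cos (p 0) - Real.cos (p 1)) * (lam * (b - d)) * (((2 * π) ^ 3)⁻¹ * (2 * π) ^ 3)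
      from by ring, inv_mul_cancel₀ h2π, hlam]
  ring
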